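/- Let v be an m₁×m₂ matrix function in the class C_ε(𝒟) which satisfies the defocusing NLS equation 2v_t = i(v_xx − 2 v v* v) on the semi-strip 𝒟. Then for each integer r ≥ 0 and each k with 0 ≤ k ≤ r: on the square 𝒟(ε_{4(r+1)}) the derivatives ∂^{k+1}v/∂t^{k+1}, (∂^{k+1}v/∂t^{k+1})_x and (∂^{k+1}v/∂t^{k+1})_{xx} exist and are continuous; the equalities (∂^k v/∂t^k)_{xt} = (∂^k v/∂t^k)_{tx} and (∂^k v/∂t^k)_{xxt} = (∂^k v/∂t^k)_{txx} hold on 𝒟(ε_{4(r+1)}), both sides being continuous there; and for every integer s ≥ 0 and all 0 ≤ ℓ ≤ s, 0 ≤ k ≤ r, the derivative ∂^ℓ/∂x^ℓ (∂^{k+1}v/∂t^{k+1}) exists and is continuous on 𝒟(ε_{s+4(r+1)}). -/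

import Mathlib

/-!
Solved for `v_t`, the equation reads `v_t = (i/2) v_xx - i v v* v`. Hence every `t`-derivative of
`v` is a differential polynomial in `v`: the `t`-derivative of such a polynomial is computed
termwise, by the Leibniz rule for products and, for `x`-derivatives, by the symmetry of mixed
partials on a square (from Fubini and the fundamental theorem of calculus), and substituting the
equation for `v_t` gives again a differential polynomial. Differential polynomials inherit
`x`-regularity from `v ∈ C_ε(𝒟)` on the squares `𝒟(ε_k)`, each `x`-derivative costing one step
of `ε`, so that `∂_t^k v` is controlled on `𝒟(ε_{2k+s})` together with its first `s`
`x`-derivatives.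
-/

open Matrix Set

/-- Entrywise partial derivative in `x` on the closed square `[0,e] × [0,e]`
(one-sided at the boundary): `g = f_x`. -/
def PX {m₁ m₂ : ℕ} (e : ℝ) (f g : ℝ → ℝ → Matrix (Fin m₁) (Fin m₂) ℂ) : Prop :=
  ∀ x ∈ Icc (0:ℝ) e, ∀ t ∈ Icc (0:ℝ) e, ∀ i j,
    HasDerivWithinAt (fun y => f y t i j) (g x t i j) (Icc (0:ℝ) e) x

/-- Entrywise partial derivative in `t` on the closed square `[0,e] × [0,e]`: `g = f_t`. -/
def PT {m₁ m₂ : ℕ} (e : ℝ) (f g : ℝ → ℝ → Matrix (Fin m₁) (Fin m₂) ℂ) : Prop :=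
  ∀ x ∈ Icc (0:ℝ) e, ∀ t ∈ Icc (0:ℝ) e, ∀ i j,
    HasDerivWithinAt (fun s => f x s i j) (g x t i j) (Icc (0:ℝ) e) t

/-- Continuity on the closed square `[0,e] × [0,e]`. -/
def ContSq {m₁ m₂ : ℕ} (e : ℝ) (f : ℝ → ℝ → Matrix (Fin m₁) (Fin m₂) ℂ) : Prop :=
  ∀ i j, ContinuousOn (fun p : ℝ × ℝ => f p.1 p.2 i j) (Icc (0:ℝ) e ×ˢ Icc (0:ℝ) e)

/-- Membership of `v` in the class `C_ε(𝒟)` (Notation 3.1 of the paper), with derivative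
witnesses `vx = v_x`, `vt = v_t`, `vxx = v_xx` on the semi-strip `𝒟 = [0,∞) × [0,a)` and
squares `𝒟(ε_k)`: `v` is continuously differentiable on `𝒟`, `v_xx` exists on `𝒟`, and for
each `k` the function `v` is `k` times continuously differentiable in `x` on `𝒟(ε_k)`. -/
structure MemCEps {m₁ m₂ : ℕ} (a : ℝ)
    (v vx vt vxx : ℝ → ℝ → Matrix (Fin m₁) (Fin m₂) ℂ) (ε : ℕ → ℝ) : Prop where
  deriv_x : ∀ x ∈ Ici (0:ℝ), ∀ t ∈ Ico (0:ℝ) a, ∀ i j,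
    HasDerivWithinAt (fun y => v y t i j) (vx x t i j) (Ici (0:ℝ)) x
  deriv_t : ∀ x ∈ Ici (0:ℝ), ∀ t ∈ Ico (0:ℝ) a, ∀ i j,
    HasDerivWithinAt (fun s => v x s i j) (vt x t i j) (Ico (0:ℝ) a) t
  cont : ∀ i j, ContinuousOn (fun p : ℝ × ℝ => v p.1 p.2 i j) (Ici 0 ×ˢ Ico 0 a)
  cont_x : ∀ i j, ContinuousOn (fun p : ℝ × ℝ => vx p.1 p.2 i j) (Ici 0 ×ˢ Ico 0 a)
  cont_t : ∀ i j, ContinuousOn (fun p : ℝ × ℝ => vt p.1 p.2 i j) (Ici 0 ×ˢ Ico 0 a)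
  deriv_xx : ∀ x ∈ Ici (0:ℝ), ∀ t ∈ Ico (0:ℝ) a, ∀ i j,
    HasDerivWithinAt (fun y => vx y t i j) (vxx x t i j) (Ici (0:ℝ)) x
  eps_pos : ∀ k, 0 < ε k
  eps_anti : Antitone ε
  eps_lt : ∀ k, ε k < a
  smooth_x : ∀ k : ℕ, ∃ w : ℕ → ℝ → ℝ → Matrix (Fin m₁) (Fin m₂) ℂ,
    w 0 = v ∧ (∀ j < k, PX (ε k) (w j) (w (j+1))) ∧ (∀ j ≤ k, ContSq (ε k) (w j))

/-- `v` satisfies the defocusing NLS equation `2v_t = i(v_xx − 2vv*v)` on `𝒟`. -/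
def SatisfiesDNLS {m₁ m₂ : ℕ} (a : ℝ)
    (v vt vxx : ℝ → ℝ → Matrix (Fin m₁) (Fin m₂) ℂ) : Prop :=
  ∀ x ∈ Ici (0:ℝ), ∀ t ∈ Ico (0:ℝ) a,
    (2 : ℂ) • vt x t = Complex.I • (vxx x t - (2 : ℂ) • (v x t * (v x t)ᴴ * v x t))


open Function MeasureTheory intervalIntegral

section MixedPartials

variable {E : Type*} [NormedAddCommGroup E] [NormedSpace ℝ E] {a b c d : ℝ}

theorem hasDerivWithinAt_integral_Icc [CompleteSpace E] {g : ℝ → E}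
    (hg : ContinuousOn g (Icc a b)) {t : ℝ} (ht : t ∈ Icc a b) :
    HasDerivWithinAt (fun u => ∫ s in a..u, g s) (g t) (Icc a b) t := by
  have hab : a ≤ b := ht.1.trans ht.2
  have hext : Continuous fun u => g (projIcc a b hab u) :=
    hg.comp_continuous (continuous_subtype_val.comp continuous_projIcc) fun u =>
      (projIcc a b hab u).2
  have heq : ∀ u ∈ Icc a b, ∫ s in a..u, g (projIcc a b hab s) = ∫ s in a..u, g s :=
    fun u hu => integral_congr fun s hs => by
      rw [uIcc_of_le hu.1] at hs
      simp [projIcc_of_mem hab (Icc_subset_Icc_right hu.2 hs)]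
  have := (hext.integral_hasStrictDerivAt a t).hasDerivAt.hasDerivWithinAt (s := Icc a b)
  rw [projIcc_of_mem hab ht] at this
  exact this.congr (fun u hu => (heq u hu).symm) (heq t ht).symm

theorem integral_eq_sub_of_hasDerivWithinAt_Icc [CompleteSpace E] {F G : ℝ → E}
    (hF : ∀ x ∈ Icc a b, HasDerivWithinAt F (G x) (Icc a b) x) (hG : ContinuousOn G (Icc a b))
    {u : ℝ} (hu : u ∈ Icc a b) :
    ∫ y in a..u, G y = F u - F a := by
  have hsub : Icc a u ⊆ Icc a b := Icc_subset_Icc_right hu.2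
  refine integral_eq_sub_of_hasDerivAt_of_le hu.1
    (fun x hx => (hF x (hsub hx)).continuousWithinAt.mono hsub) (fun x hx => ?_)
    ((hG.mono hsub).intervalIntegrable_of_Icc hu.1)
  exact (hF x (hsub (Ioo_subset_Icc_self hx))).hasDerivAt
    (Icc_mem_nhds hx.1 (hx.2.trans_le hu.2))

theorem continuousOn_intervalIntegral_of_continuousOn_prod {G : ℝ → ℝ → E}
    (hG : ContinuousOn (uncurry G) (Icc a b ×ˢ Icc c d)) {T : ℝ} (hT : T ∈ Icc c d) :
    ContinuousOn (fun y => ∫ s in c..T, G y s) (Icc a b) := by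
  intro y hy
  have hab : a ≤ b := hy.1.trans hy.2
  have hcd : c ≤ d := hT.1.trans hT.2
  set P : ℝ × ℝ → ℝ × ℝ := fun p => (projIcc a b hab p.1, projIcc c d hcd p.2)
  have hext : Continuous (uncurry G ∘ P) :=
    hG.comp_continuous (by fun_prop) fun p => ⟨(projIcc a b hab p.1).2, (projIcc c d hcd p.2).2⟩
  have heq : ∀ y ∈ Icc a b, ∫ s in c..T, uncurry G (P (y, s)) = ∫ s in c..T, G y s :=
    fun y hy => integral_congr fun s hs => by
      rw [uIcc_of_le hT.1] at hs
      simp [P, projIcc_of_mem hab hy, projIcc_of_mem hcd (Icc_subset_Icc_right hT.2 hs)]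
  exact ((continuous_parametric_intervalIntegral_of_continuous'
    (f := fun y s => uncurry G (P (y, s))) hext c T).continuousWithinAt).congr
    (fun y hy => (heq y hy).symm) (heq y hy).symm

theorem intervalIntegral_swap_of_continuousOn {G : ℝ → ℝ → E}
    (hG : ContinuousOn (uncurry G) (Icc a b ×ˢ Icc c d)) {X T : ℝ} (hX : X ∈ Icc a b)
    (hT : T ∈ Icc c d) :
    ∫ y in a..X, ∫ s in c..T, G y s = ∫ s in c..T, ∫ y in a..X, G y s := by
  refine intervalIntegral_intervalIntegral_swap
    ((hG.integrableOn_compact (isCompact_Icc.prod isCompact_Icc)).mono_set (prod_mono ?_ ?_))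
  · rw [uIoc_of_le hX.1]; exact Ioc_subset_Icc_self.trans (Icc_subset_Icc_right hX.2)
  · rw [uIoc_of_le hT.1]; exact Ioc_subset_Icc_self.trans (Icc_subset_Icc_right hT.2)

theorem hasDerivWithinAt_of_mixed_partials [CompleteSpace E] (hab : a < b) {F Ft Fx Fxt : ℝ → ℝ → E}
    (hFx : ∀ x ∈ Icc a b, ∀ t ∈ Icc c d, HasDerivWithinAt (F · t) (Fx x t) (Icc a b) x)
    (hFt : ∀ x ∈ Icc a b, ∀ t ∈ Icc c d, HasDerivWithinAt (F x ·) (Ft x t) (Icc c d) t)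
    (hFtx : ∀ x ∈ Icc a b, ∀ t ∈ Icc c d, HasDerivWithinAt (Ft · t) (Fxt x t) (Icc a b) x)
    (hFt_cont : ContinuousOn (uncurry Ft) (Icc a b ×ˢ Icc c d))
    (hFxt_cont : ContinuousOn (uncurry Fxt) (Icc a b ×ˢ Icc c d))
    {x t : ℝ} (hx : x ∈ Icc a b) (ht : t ∈ Icc c d) :
    HasDerivWithinAt (Fx x ·) (Fxt x t) (Icc c d) t := by
  have hc : c ∈ Icc c d := left_mem_Icc.2 (ht.1.trans ht.2)
  have ha : a ∈ Icc a b := left_mem_Icc.2 hab.le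
  have key : ∀ T ∈ Icc c d, Fx x T = Fx x c + ∫ s in c..T, Fxt x s := by
    intro T hT
    set Φ : ℝ → E := fun y => ∫ s in c..T, Fxt y s
    -- `Fx x T - Fx x c` and `Φ x` are both the derivative at `x` of `X ↦ ∫ y in a..X, Φ y`
    have hΦ : ∀ X ∈ Icc a b, ∫ y in a..X, Φ y = (F X T - F a T) - (F X c - F a c) := by
      intro X hX
      rw [intervalIntegral_swap_of_continuousOn hFxt_cont hX hT]
      calc ∫ s in c..T, ∫ y in a..X, Fxt y s = ∫ s in c..T, (Ft X s - Ft a s) := by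
            refine integral_congr fun s hs => ?_
            rw [uIcc_of_le hT.1] at hs
            have hs' : s ∈ Icc c d := Icc_subset_Icc_right hT.2 hs
            exact integral_eq_sub_of_hasDerivWithinAt_Icc (fun y hy => hFtx y hy s hs')
              (hFxt_cont.uncurry_right s hs') hX
        _ = (F X T - F a T) - (F X c - F a c) :=
            integral_eq_sub_of_hasDerivWithinAt_Icc
              (fun s hs => (hFt X hX s hs).sub (hFt a ha s hs))
              ((hFt_cont.uncurry_left X hX).sub (hFt_cont.uncurry_left a ha)) hT
    have hprim := hasDerivWithinAt_integral_Icc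
      (continuousOn_intervalIntegral_of_continuousOn_prod hFxt_cont hT) hx
    have hdiff : HasDerivWithinAt (fun X => ∫ y in a..X, Φ y) (Fx x T - Fx x c) (Icc a b) x :=
      (((hFx x hx T hT).sub_const (F a T)).sub ((hFx x hx c hc).sub_const (F a c))).congr
        hΦ (hΦ x hx)
    rw [← (uniqueDiffOn_Icc hab x hx).eq_deriv _ hdiff hprim]
    abel
  exact ((hasDerivWithinAt_integral_Icc (hFxt_cont.uncurry_left x hx) ht).const_add
    (Fx x c)).congr key (key t ht)

end MixedPartials

abbrev MatFn (p r : ℕ) := ℝ → ℝ → Matrix (Fin p) (Fin r) ℂ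

noncomputable def xDeriv {p r : ℕ} (e : ℝ) (f : MatFn p r) : MatFn p r :=
  fun x t => Matrix.of fun i j => derivWithin (fun y => f y t i j) (Icc 0 e) x

section SquareCalculus

variable {p q r : ℕ} {e e' : ℝ} {f g f' g' : MatFn p q} {u u' : MatFn q r} {c : ℂ}

theorem PX.mono (h : PX e f g) (he : e' ≤ e) : PX e' f g := fun x hx t ht i j =>
  (h x ⟨hx.1, hx.2.trans he⟩ t ⟨ht.1, ht.2.trans he⟩ i j).mono (Icc_subset_Icc_right he)

theorem PT.mono (h : PT e f g) (he : e' ≤ e) : PT e' f g := fun x hx t ht i j =>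
  (h x ⟨hx.1, hx.2.trans he⟩ t ⟨ht.1, ht.2.trans he⟩ i j).mono (Icc_subset_Icc_right he)

theorem ContSq.mono (h : ContSq e f) (he : e' ≤ e) : ContSq e' f := fun i j =>
  (h i j).mono (prod_mono (Icc_subset_Icc_right he) (Icc_subset_Icc_right he))

theorem PX.congr (h : PX e f g) (hf : ∀ x ∈ Icc 0 e, ∀ t ∈ Icc 0 e, f x t = f' x t) :
    PX e f' g := fun x hx t ht i j =>
  (h x hx t ht i j).congr (fun y hy => by rw [hf y hy t ht]) (by rw [hf x hx t ht])

theorem ContSq.congr (h : ContSq e f) (hf : ∀ x ∈ Icc 0 e, ∀ t ∈ Icc 0 e, f x t = f' x t) :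
    ContSq e f' := fun i j =>
  (h i j).congr fun z hz => (congrFun (congrFun (hf z.1 hz.1 z.2 hz.2) i) j).symm

theorem PX.hasXDeriv_xDeriv (h : PX e f g) : PX e f (xDeriv e f) := fun x hx t ht i j =>
  (h x hx t ht i j).differentiableWithinAt.hasDerivWithinAt

theorem PX.eq_xDeriv (he : 0 < e) (h : PX e f g) :
    ∀ x ∈ Icc 0 e, ∀ t ∈ Icc 0 e, g x t = xDeriv e f x t := fun x hx t ht => by
  ext i j
  exact ((h x hx t ht i j).derivWithin (uniqueDiffOn_Icc he x hx)).symm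

theorem pt_iff_px_swap : PT e f g ↔ PX e (fun x t => f t x) (fun x t => g t x) :=
  ⟨fun h x hx t ht => h t ht x hx, fun h x hx t ht => h t ht x hx⟩

theorem PX.add (h : PX e f g) (h' : PX e f' g') :
    PX e (fun x t => f x t + f' x t) (fun x t => g x t + g' x t) := fun x hx t ht i j =>
  (h x hx t ht i j).add (h' x hx t ht i j)

theorem PX.smul (h : PX e f g) : PX e (fun x t => c • f x t) (fun x t => c • g x t) :=
  fun x hx t ht i j => by
    simpa only [Matrix.smul_apply, smul_eq_mul] using (h x hx t ht i j).const_mul c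

theorem PX.conjTranspose (h : PX e f g) :
    PX e (fun x t => (f x t)ᴴ) (fun x t => (g x t)ᴴ) := fun x hx t ht i j => by
  simpa only [conjTranspose_apply] using (h x hx t ht j i).star

theorem PX.mul (h : PX e f g) (h' : PX e u u') :
    PX e (fun x t => f x t * u x t) (fun x t => g x t * u x t + f x t * u' x t) :=
  fun x hx t ht i j => by
    simp only [Matrix.add_apply, mul_apply, ← Finset.sum_add_distrib]
    exact HasDerivWithinAt.fun_sum fun k _ => (h x hx t ht i k).mul (h' x hx t ht k j)

theorem PT.add (h : PT e f g) (h' : PT e f' g') :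
    PT e (fun x t => f x t + f' x t) (fun x t => g x t + g' x t) :=
  pt_iff_px_swap.2 ((pt_iff_px_swap.1 h).add (pt_iff_px_swap.1 h'))

theorem PT.smul (h : PT e f g) : PT e (fun x t => c • f x t) (fun x t => c • g x t) :=
  pt_iff_px_swap.2 (pt_iff_px_swap.1 h).smul

theorem PT.conjTranspose (h : PT e f g) : PT e (fun x t => (f x t)ᴴ) (fun x t => (g x t)ᴴ) :=
  pt_iff_px_swap.2 (pt_iff_px_swap.1 h).conjTranspose

theorem PT.mul (h : PT e f g) (h' : PT e u u') :
    PT e (fun x t => f x t * u x t) (fun x t => g x t * u x t + f x t * u' x t) :=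
  pt_iff_px_swap.2 ((pt_iff_px_swap.1 h).mul (pt_iff_px_swap.1 h'))

theorem ContSq.add (h : ContSq e f) (h' : ContSq e f') : ContSq e (fun x t => f x t + f' x t) :=
  fun i j => (h i j).add (h' i j)

theorem ContSq.smul (h : ContSq e f) : ContSq e (fun x t => c • f x t) :=
  fun i j => (h i j).const_smul c

theorem ContSq.conjTranspose (h : ContSq e f) : ContSq e (fun x t => (f x t)ᴴ) := fun i j => by
  simpa only [conjTranspose_apply] using (h j i).star

theorem ContSq.mul (h : ContSq e f) (h' : ContSq e u) : ContSq e (fun x t => f x t * u x t) :=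
  fun i j => by
    simp only [mul_apply]
    exact continuousOn_finsetSum _ fun k _ => (h i k).mul (h' k j)

theorem PT.of_mixed_partials (he : 0 < e) {ft gt : MatFn p q} (hfx : PX e f g) (hft : PT e f ft)
    (hftx : PX e ft gt) (hft_cont : ContSq e ft) (hgt_cont : ContSq e gt) : PT e g gt :=
  fun _ hx _ ht i j => hasDerivWithinAt_of_mixed_partials he (F := fun x t => f x t i j)
    (fun x hx t ht => hfx x hx t ht i j) (fun x hx t ht => hft x hx t ht i j)
    (fun x hx t ht => hftx x hx t ht i j) (hft_cont i j) (hgt_cont i j) hx ht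

end SquareCalculus

def ContDiffX {p r : ℕ} (n : ℕ) (e : ℝ) (f : MatFn p r) : Prop :=
  ∃ w : ℕ → MatFn p r, w 0 = f ∧ (∀ j < n, PX e (w j) (w (j+1))) ∧ ∀ j ≤ n, ContSq e (w j)

section ContDiffX

variable {p q r n : ℕ} {e e' : ℝ} {f f' : MatFn p q} {u : MatFn q r} {c : ℂ}

theorem contDiffX_zero_iff : ContDiffX 0 e f ↔ ContSq e f :=
  ⟨fun ⟨_, hw0, _, hwc⟩ => hw0 ▸ hwc 0 le_rfl,
    fun h => ⟨fun _ => f, rfl, fun _ hj => absurd hj (Nat.not_lt_zero _), fun _ _ => h⟩⟩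

theorem contDiffX_succ_iff :
    ContDiffX (n+1) e f ↔ ContSq e f ∧ ∃ g, PX e f g ∧ ContDiffX n e g := by
  constructor
  · rintro ⟨w, rfl, hwx, hwc⟩
    exact ⟨hwc 0 (Nat.zero_le _), w 1, hwx 0 n.succ_pos,
      fun j => w (j+1), rfl, fun j hj => hwx (j+1) (by omega), fun j hj => hwc (j+1) (by omega)⟩
  · rintro ⟨hc, g, hg, w, rfl, hwx, hwc⟩
    refine ⟨fun | 0 => f | j+1 => w j, rfl, ?_, ?_⟩
    · rintro (_ | j) hj
      exacts [hg, hwx j (by omega)]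
    · rintro (_ | j) hj
      exacts [hc, hwc j (by omega)]

theorem ContDiffX.contSq (h : ContDiffX n e f) : ContSq e f := by
  obtain ⟨w, rfl, -, hwc⟩ := h
  exact hwc 0 (Nat.zero_le _)

theorem ContDiffX.of_succ (h : ContDiffX (n+1) e f) : ContDiffX n e f := by
  obtain ⟨w, hw0, hwx, hwc⟩ := h
  exact ⟨w, hw0, fun j hj => hwx j (by omega), fun j hj => hwc j (by omega)⟩

theorem ContDiffX.mono (h : ContDiffX n e f) (he : e' ≤ e) : ContDiffX n e' f := by
  obtain ⟨w, hw0, hwx, hwc⟩ := h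
  exact ⟨w, hw0, fun j hj => (hwx j hj).mono he, fun j hj => (hwc j hj).mono he⟩

theorem ContDiffX.congr (h : ContDiffX n e f)
    (hf : ∀ x ∈ Icc 0 e, ∀ t ∈ Icc 0 e, f x t = f' x t) : ContDiffX n e f' := by
  cases n with
  | zero => exact contDiffX_zero_iff.2 (contDiffX_zero_iff.1 h |>.congr hf)
  | succ n =>
    obtain ⟨hc, g, hg, hgn⟩ := contDiffX_succ_iff.1 h
    exact contDiffX_succ_iff.2 ⟨hc.congr hf, g, hg.congr hf, hgn⟩

theorem ContDiffX.add (h : ContDiffX n e f) (h' : ContDiffX n e f') :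
    ContDiffX n e (fun x t => f x t + f' x t) := by
  obtain ⟨w, rfl, hwx, hwc⟩ := h
  obtain ⟨w', rfl, hwx', hwc'⟩ := h'
  exact ⟨fun j x t => w j x t + w' j x t, rfl, fun j hj => (hwx j hj).add (hwx' j hj),
    fun j hj => (hwc j hj).add (hwc' j hj)⟩

theorem ContDiffX.smul (h : ContDiffX n e f) : ContDiffX n e (fun x t => c • f x t) := by
  obtain ⟨w, rfl, hwx, hwc⟩ := h
  exact ⟨fun j x t => c • w j x t, rfl, fun j hj => (hwx j hj).smul, fun j hj => (hwc j hj).smul⟩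

theorem ContDiffX.conjTranspose (h : ContDiffX n e f) :
    ContDiffX n e (fun x t => (f x t)ᴴ) := by
  obtain ⟨w, rfl, hwx, hwc⟩ := h
  exact ⟨fun j x t => (w j x t)ᴴ, rfl, fun j hj => (hwx j hj).conjTranspose,
    fun j hj => (hwc j hj).conjTranspose⟩

theorem ContDiffX.mul (h : ContDiffX n e f) (h' : ContDiffX n e u) :
    ContDiffX n e (fun x t => f x t * u x t) := by
  induction n generalizing f u with
  | zero => exact contDiffX_zero_iff.2 (h.contSq.mul h'.contSq)
  | succ n ih =>
    obtain ⟨hfc, g, hg, hgn⟩ := contDiffX_succ_iff.1 h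
    obtain ⟨huc, g', hg', hgn'⟩ := contDiffX_succ_iff.1 h'
    exact contDiffX_succ_iff.2
      ⟨hfc.mul huc, _, hg.mul hg', (ih hgn h'.of_succ).add (ih h.of_succ hgn')⟩

end ContDiffX

/-- Membership in `C_ε(𝒟)` with the index of `ε` shifted by `q`. -/
def XRegular {p r : ℕ} (ε : ℕ → ℝ) (q : ℕ) (f : MatFn p r) : Prop :=
  ∀ s, ContDiffX s (ε (q + s)) f

section XRegular

variable {p q' r q : ℕ} {ε : ℕ → ℝ} {f f' : MatFn p q'} {u : MatFn q' r} {c : ℂ}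

theorem XRegular.contSq (h : XRegular ε q f) : ContSq (ε q) f :=
  (h 0).contSq

theorem XRegular.mono (hε : Antitone ε) (h : XRegular ε q f) {q₂ : ℕ} (hq : q ≤ q₂) :
    XRegular ε q₂ f := fun s =>
  (h s).mono (hε (by omega))

theorem XRegular.hasXDeriv (h : XRegular ε q f) : PX (ε (q+1)) f (xDeriv (ε (q+1)) f) := by
  obtain ⟨-, g, hg, -⟩ := contDiffX_succ_iff.1 (h 1)
  exact hg.hasXDeriv_xDeriv

theorem XRegular.xDeriv (hpos : ∀ k, 0 < ε k) (hε : Antitone ε) (h : XRegular ε q f) :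
    XRegular ε (q+1) (xDeriv (ε (q+1)) f) := by
  intro s
  obtain ⟨-, g, hg, hgs⟩ := contDiffX_succ_iff.1 (h (s+1))
  rw [show q + 1 + s = q + (s+1) by omega]
  refine hgs.congr fun x hx t ht => ?_
  rw [hg.eq_xDeriv (hpos _) x hx t ht]
  exact ((h.hasXDeriv.mono (hε (by omega))).eq_xDeriv (hpos _) x hx t ht).symm

theorem XRegular.add (h : XRegular ε q f) (h' : XRegular ε q f') :
    XRegular ε q (fun x t => f x t + f' x t) := fun s => (h s).add (h' s)

theorem XRegular.smul (h : XRegular ε q f) : XRegular ε q (fun x t => c • f x t) :=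
  fun s => (h s).smul

theorem XRegular.conjTranspose (h : XRegular ε q f) : XRegular ε q (fun x t => (f x t)ᴴ) :=
  fun s => (h s).conjTranspose

theorem XRegular.mul (h : XRegular ε q f) (h' : XRegular ε q u) :
    XRegular ε q (fun x t => f x t * u x t) := fun s => (h s).mul (h' s)

end XRegular

/-- `f_t` lags two steps of `ε` behind `f`, as `v_t` does behind `v` through `v_xx`. -/
structure HasRegularTDeriv {p r : ℕ} (ε : ℕ → ℝ) (q : ℕ) (f ft : MatFn p r) : Prop where
  regular : XRegular ε q f
  regular_tDeriv : XRegular ε (q+2) ft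
  hasTDeriv : PT (ε (q+2)) f ft

namespace HasRegularTDeriv

variable {p q' r q : ℕ} {ε : ℕ → ℝ} {f ft f' ft' : MatFn p q'} {u ut : MatFn q' r} {c : ℂ}

theorem mono (hε : Antitone ε) (h : HasRegularTDeriv ε q f ft) : HasRegularTDeriv ε (q+1) f ft :=
  ⟨h.regular.mono hε (by omega), h.regular_tDeriv.mono hε (by omega),
    h.hasTDeriv.mono (hε (by omega))⟩

theorem add (h : HasRegularTDeriv ε q f ft) (h' : HasRegularTDeriv ε q f' ft') :
    HasRegularTDeriv ε q (fun x t => f x t + f' x t) (fun x t => ft x t + ft' x t) :=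
  ⟨h.regular.add h'.regular, h.regular_tDeriv.add h'.regular_tDeriv,
    h.hasTDeriv.add h'.hasTDeriv⟩

theorem smul (h : HasRegularTDeriv ε q f ft) :
    HasRegularTDeriv ε q (fun x t => c • f x t) (fun x t => c • ft x t) :=
  ⟨h.regular.smul, h.regular_tDeriv.smul, h.hasTDeriv.smul⟩

theorem conjTranspose (h : HasRegularTDeriv ε q f ft) :
    HasRegularTDeriv ε q (fun x t => (f x t)ᴴ) (fun x t => (ft x t)ᴴ) :=
  ⟨h.regular.conjTranspose, h.regular_tDeriv.conjTranspose, h.hasTDeriv.conjTranspose⟩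

theorem mul (hε : Antitone ε) (h : HasRegularTDeriv ε q f ft) (h' : HasRegularTDeriv ε q u ut) :
    HasRegularTDeriv ε q (fun x t => f x t * u x t)
      (fun x t => ft x t * u x t + f x t * ut x t) :=
  ⟨h.regular.mul h'.regular,
    (h.regular_tDeriv.mul (h'.regular.mono hε (by omega))).add
      ((h.regular.mono hε (by omega)).mul h'.regular_tDeriv),
    h.hasTDeriv.mul h'.hasTDeriv⟩

theorem xDeriv (hpos : ∀ k, 0 < ε k) (hε : Antitone ε) (h : HasRegularTDeriv ε q f ft) :
    HasRegularTDeriv ε (q+1) (xDeriv (ε (q+1)) f) (xDeriv (ε (q+3)) ft) :=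
  ⟨h.regular.xDeriv hpos hε, h.regular_tDeriv.xDeriv hpos hε,
    PT.of_mixed_partials (hpos _) (h.regular.hasXDeriv.mono (hε (by omega)))
      (h.hasTDeriv.mono (hε (by omega))) h.regular_tDeriv.hasXDeriv
      (h.regular_tDeriv.contSq.mono (hε (by omega))) (h.regular_tDeriv.xDeriv hpos hε).contSq⟩

theorem exists_mixed_partials (hpos : ∀ k, 0 < ε k) (hε : Antitone ε)
    (h : HasRegularTDeriv ε q f ft) {e : ℝ} (he : e ≤ ε (q+4)) :
    ∃ g₁ g₂ h₁ h₂ : MatFn p q', PX e ft g₁ ∧ PX e g₁ g₂ ∧ ContSq e g₁ ∧ ContSq e g₂ ∧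
      PX e f h₁ ∧ ContSq e h₁ ∧ PT e h₁ g₁ ∧ PX e h₁ h₂ ∧ ContSq e h₂ ∧ PT e h₂ g₂ := by
  have h₁ := h.xDeriv hpos hε
  have h₂ := h₁.xDeriv hpos hε
  refine ⟨_, _, _, _, h.regular_tDeriv.hasXDeriv.mono ?_, h₁.regular_tDeriv.hasXDeriv.mono ?_,
    h₁.regular_tDeriv.contSq.mono ?_, h₂.regular_tDeriv.contSq.mono ?_,
    h.regular.hasXDeriv.mono ?_, h₁.regular.contSq.mono ?_, h₁.hasTDeriv.mono ?_,
    h₁.regular.hasXDeriv.mono ?_, h₂.regular.contSq.mono ?_, h₂.hasTDeriv.mono ?_⟩ <;>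
  exact he.trans (hε (by omega))

end HasRegularTDeriv

/-- Pairs `(f, f_t)` where `f` is a differential polynomial in `v` and `f_t` is its formal
`t`-derivative, computed from `v_t = w`. The index `q` records how far down the sequence `ε`
the pair is controlled: `x`-differentiation costs one step. -/
inductive DiffPoly (ε : ℕ → ℝ) {m₁ m₂ : ℕ} (v w : MatFn m₁ m₂) :
    ℕ → ∀ {p r : ℕ}, MatFn p r → MatFn p r → Prop
  | base : DiffPoly ε v w 0 v w
  | add {q p r : ℕ} {f ft f' ft' : MatFn p r} : DiffPoly ε v w q f ft →
      DiffPoly ε v w q f' ft' →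
      DiffPoly ε v w q (fun x t => f x t + f' x t) (fun x t => ft x t + ft' x t)
  | smul {q p r : ℕ} (c : ℂ) {f ft : MatFn p r} : DiffPoly ε v w q f ft →
      DiffPoly ε v w q (fun x t => c • f x t) (fun x t => c • ft x t)
  | conjTranspose {q p r : ℕ} {f ft : MatFn p r} : DiffPoly ε v w q f ft →
      DiffPoly ε v w q (fun x t => (f x t)ᴴ) (fun x t => (ft x t)ᴴ)
  | mul {q p s r : ℕ} {f ft : MatFn p s} {u ut : MatFn s r} : DiffPoly ε v w q f ft →
      DiffPoly ε v w q u ut →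
      DiffPoly ε v w q (fun x t => f x t * u x t) (fun x t => ft x t * u x t + f x t * ut x t)
  | xDeriv {q p r : ℕ} {f ft : MatFn p r} : DiffPoly ε v w q f ft →
      DiffPoly ε v w (q+1) (xDeriv (ε (q+1)) f) (xDeriv (ε (q+3)) ft)
  | mono {q p r : ℕ} {f ft : MatFn p r} : DiffPoly ε v w q f ft → DiffPoly ε v w (q+1) f ft

namespace DiffPoly

variable {ε : ℕ → ℝ} {m₁ m₂ p r q : ℕ} {v w : MatFn m₁ m₂} {f ft : MatFn p r}

theorem hasRegularTDeriv (hpos : ∀ k, 0 < ε k) (hε : Antitone ε)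
    (hbase : HasRegularTDeriv ε 0 v w) (h : DiffPoly ε v w q f ft) :
    HasRegularTDeriv ε q f ft := by
  induction h with
  | base => exact hbase
  | add _ _ ih ih' => exact ih.add ih'
  | smul c _ ih => exact ih.smul
  | conjTranspose _ ih => exact ih.conjTranspose
  | mul _ _ ih ih' => exact ih.mul hε ih'
  | xDeriv _ ih => exact ih.xDeriv hpos hε
  | mono _ ih => exact ih.mono hε

theorem exists_tDeriv (hbase : ∃ w', DiffPoly ε v w 2 w w') (h : DiffPoly ε v w q f ft) :
    ∃ ftt, DiffPoly ε v w (q+2) ft ftt := by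
  induction h with
  | base => exact hbase
  | add _ _ ih ih' =>
    obtain ⟨_, h⟩ := ih
    obtain ⟨_, h'⟩ := ih'
    exact ⟨_, h.add h'⟩
  | smul c _ ih =>
    obtain ⟨_, h⟩ := ih
    exact ⟨_, h.smul c⟩
  | conjTranspose _ ih =>
    obtain ⟨_, h⟩ := ih
    exact ⟨_, h.conjTranspose⟩
  | mul hf hu ih ih' =>
    obtain ⟨_, h⟩ := ih
    obtain ⟨_, h'⟩ := ih'
    exact ⟨_, (h.mul hu.mono.mono).add (hf.mono.mono.mul h')⟩
  | xDeriv _ ih =>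
    obtain ⟨_, h⟩ := ih
    exact ⟨_, h.xDeriv⟩
  | mono _ ih =>
    obtain ⟨_, h⟩ := ih
    exact ⟨_, h.mono⟩

end DiffPoly

theorem exists_seq_of_exists_next {α : Type*} {R : ℕ → α → α → Prop} {a b : α} (h0 : R 0 a b)
    (hnext : ∀ k x y, R k x y → ∃ z, R (k+1) y z) :
    ∃ s : ℕ → α, s 0 = a ∧ ∀ k, R k (s k) (s (k+1)) := by
  have : Nonempty α := ⟨a⟩
  choose! next hnext using hnext
  let pair : ℕ → α × α := fun k => Nat.rec (a, b) (fun k xy => (xy.2, next k xy.1 xy.2)) k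
  have hpair : ∀ k, R k (pair k).1 (pair k).2 := by
    intro k
    induction k with
    | zero => exact h0
    | succ k ih => exact hnext k _ _ ih
  exact ⟨fun k => (pair k).1, rfl, hpair⟩

noncomputable def dnlsRHS {m₁ m₂ : ℕ} (ε : ℕ → ℝ) (v : MatFn m₁ m₂) : MatFn m₁ m₂ :=
  fun x t => (Complex.I / 2) • xDeriv (ε 2) (xDeriv (ε 1) v) x t +
    (-Complex.I) • (v x t * (v x t)ᴴ * v x t)

theorem diffPoly_dnlsRHS {m₁ m₂ : ℕ} (ε : ℕ → ℝ) (v : MatFn m₁ m₂) :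
    ∃ w', DiffPoly ε v (dnlsRHS ε v) 2 (dnlsRHS ε v) w' :=
  have hv : DiffPoly ε v (dnlsRHS ε v) 0 v (dnlsRHS ε v) := .base
  ⟨_, (hv.xDeriv.xDeriv.smul _).add (((hv.mul hv.conjTranspose).mul hv).mono.mono.smul _)⟩

namespace MemCEps

variable {m₁ m₂ : ℕ} {a : ℝ} {v vx vt vxx : MatFn m₁ m₂} {ε : ℕ → ℝ}

theorem xRegular (hv : MemCEps a v vx vt vxx ε) : XRegular ε 0 v := fun s => by
  rw [zero_add]
  exact hv.smooth_x s

theorem xRegular_dnlsRHS (hv : MemCEps a v vx vt vxx ε) : XRegular ε 2 (dnlsRHS ε v) :=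
  have hv₂ := hv.xRegular.mono hv.eps_anti (Nat.zero_le 2)
  ((hv.xRegular.xDeriv hv.eps_pos hv.eps_anti).xDeriv hv.eps_pos hv.eps_anti).smul.add
    ((hv₂.mul hv₂.conjTranspose).mul hv₂).smul

theorem hasTDeriv_dnlsRHS (hv : MemCEps a v vx vt vxx ε) (hNLS : SatisfiesDNLS a v vt vxx) :
    PT (ε 2) v (dnlsRHS ε v) := by
  have hε₂ : ε 2 ≤ ε 1 := hv.eps_anti (by norm_num)
  have hvx : PX (ε 1) v vx := fun x hx t ht i j =>
    (hv.deriv_x x hx.1 t ⟨ht.1, ht.2.trans_lt (hv.eps_lt 1)⟩ i j).mono Icc_subset_Ici_self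
  have hvxx : PX (ε 2) vx vxx := fun x hx t ht i j =>
    (hv.deriv_xx x hx.1 t ⟨ht.1, ht.2.trans_lt (hv.eps_lt 2)⟩ i j).mono Icc_subset_Ici_self
  have hvxx_eq := (hvxx.congr fun x hx t ht => hvx.eq_xDeriv (hv.eps_pos 1) x
    ⟨hx.1, hx.2.trans hε₂⟩ t ⟨ht.1, ht.2.trans hε₂⟩).eq_xDeriv (hv.eps_pos 2)
  intro x hx t ht i j
  have ht' : t ∈ Ico 0 a := ⟨ht.1, ht.2.trans_lt (hv.eps_lt 2)⟩
  refine ((hv.deriv_t x hx.1 t ht' i j).mono fun s hs => ⟨hs.1, hs.2.trans_lt (hv.eps_lt 2)⟩)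
    |>.congr_deriv ?_
  have h := congrFun (congrFun (hNLS x hx.1 t ht') i) j
  simp only [dnlsRHS, ← hvxx_eq x hx t ht, Matrix.add_apply, Matrix.sub_apply,
    Matrix.smul_apply, smul_eq_mul] at h ⊢
  linear_combination h / 2

theorem exists_tDeriv_seq (hv : MemCEps a v vx vt vxx ε) (hNLS : SatisfiesDNLS a v vt vxx) :
    ∃ vT : ℕ → MatFn m₁ m₂, vT 0 = v ∧ ∀ k, HasRegularTDeriv ε (2*k) (vT k) (vT (k+1)) := by
  obtain ⟨vT, hvT0, hvT⟩ := exists_seq_of_exists_next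
    (R := fun k f ft => DiffPoly ε v (dnlsRHS ε v) (2*k) f ft) DiffPoly.base
    fun _ _ _ h => DiffPoly.exists_tDeriv (diffPoly_dnlsRHS ε v) h
  have hbase : HasRegularTDeriv ε 0 v (dnlsRHS ε v) :=
    ⟨hv.xRegular, hv.xRegular_dnlsRHS, hv.hasTDeriv_dnlsRHS hNLS⟩
  exact ⟨vT, hvT0, fun k => (hvT k).hasRegularTDeriv hv.eps_pos hv.eps_anti hbase⟩

end MemCEps

theorem dnls_t_derivatives_regularity_general {m₁ m₂ : ℕ} (a : ℝ)
    (v vx vt vxx : ℝ → ℝ → Matrix (Fin m₁) (Fin m₂) ℂ) (ε : ℕ → ℝ)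
    (hv : MemCEps a v vx vt vxx ε)
    (hNLS : SatisfiesDNLS a v vt vxx) :
    ∀ r : ℕ, ∃ vT : ℕ → ℝ → ℝ → Matrix (Fin m₁) (Fin m₂) ℂ, vT 0 = v ∧
      ∀ k ≤ r,
        -- ∂_t^{k+1} v exists and is continuous on 𝒟(ε_{4(r+1)})
        (PT (ε (4*(r+1))) (vT k) (vT (k+1)) ∧ ContSq (ε (4*(r+1))) (vT (k+1))) ∧
        (∃ g₁ g₂ h₁ h₂ : ℝ → ℝ → Matrix (Fin m₁) (Fin m₂) ℂ,
          -- (∂_t^{k+1} v)_x and (∂_t^{k+1} v)_{xx} exist and are continuous there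
          PX (ε (4*(r+1))) (vT (k+1)) g₁ ∧ PX (ε (4*(r+1))) g₁ g₂ ∧
          ContSq (ε (4*(r+1))) g₁ ∧ ContSq (ε (4*(r+1))) g₂ ∧
          -- (∂_t^k v)_x =: h₁ and (∂_t^k v)_{xt} exists and equals (∂_t^k v)_{tx} = g₁
          PX (ε (4*(r+1))) (vT k) h₁ ∧ ContSq (ε (4*(r+1))) h₁ ∧
          PT (ε (4*(r+1))) h₁ g₁ ∧
          -- (∂_t^k v)_{xx} =: h₂ and (∂_t^k v)_{xxt} exists and equals (∂_t^k v)_{txx} = g₂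
          PX (ε (4*(r+1))) h₁ h₂ ∧ ContSq (ε (4*(r+1))) h₂ ∧
          PT (ε (4*(r+1))) h₂ g₂) ∧
        -- ∂_x^ℓ ∂_t^{k+1} v exists and is continuous on 𝒟(ε_{s+4(r+1)}) for ℓ ≤ s
        (∀ s : ℕ, ∃ W : ℕ → ℝ → ℝ → Matrix (Fin m₁) (Fin m₂) ℂ,
          W 0 = vT (k+1) ∧ (∀ l < s, PX (ε (s + 4*(r+1))) (W l) (W (l+1))) ∧
          (∀ l ≤ s, ContSq (ε (s + 4*(r+1))) (W l))) := by
  intro r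
  obtain ⟨vT, hvT0, hvT⟩ := hv.exists_tDeriv_seq hNLS
  have hε := hv.eps_anti
  refine ⟨vT, hvT0, fun k hk => ⟨⟨(hvT k).hasTDeriv.mono (hε (by omega)),
    (hvT k).regular_tDeriv.contSq.mono (hε (by omega))⟩,
    (hvT k).exists_mixed_partials hv.eps_pos hε (hε (by omega)), fun s => ?_⟩⟩
  rw [add_comm s]
  exact (hvT k).regular_tDeriv.mono hε (by omega : 2*k+2 ≤ 4*(r+1)) s

/-- Proposition 3.1, regularity part.  For `v ∈ C_ε(𝒟)` satisfying the
defocusing NLS on `𝒟`, for each `r` there is a chain `vT` of `t`-derivatives of `v` such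
that for all `k ≤ r`: `∂_t^{k+1}v`, `(∂_t^{k+1}v)_x`, `(∂_t^{k+1}v)_{xx}` exist and are
continuous on `𝒟(ε_{4(r+1)})`; `(∂_t^k v)_{xt} = (∂_t^k v)_{tx}` and
`(∂_t^k v)_{xxt} = (∂_t^k v)_{txx}` (both sides continuous) hold there; and for all
`s` and `ℓ ≤ s` the derivative `∂_x^ℓ ∂_t^{k+1} v` exists and is continuous on
`𝒟(ε_{s+4(r+1)})`. -/
theorem dnls_t_derivatives_regularity {m₁ m₂ : ℕ} (a : ℝ) (ha : 0 < a)
    (v vx vt vxx : ℝ → ℝ → Matrix (Fin m₁) (Fin m₂) ℂ) (ε : ℕ → ℝ)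
    (hv : MemCEps a v vx vt vxx ε)
    (hNLS : SatisfiesDNLS a v vt vxx) :
    ∀ r : ℕ, ∃ vT : ℕ → ℝ → ℝ → Matrix (Fin m₁) (Fin m₂) ℂ, vT 0 = v ∧
      ∀ k ≤ r,
        -- ∂_t^{k+1} v exists and is continuous on 𝒟(ε_{4(r+1)})
        (PT (ε (4*(r+1))) (vT k) (vT (k+1)) ∧ ContSq (ε (4*(r+1))) (vT (k+1))) ∧
        (∃ g₁ g₂ h₁ h₂ : ℝ → ℝ → Matrix (Fin m₁) (Fin m₂) ℂ,
          -- (∂_t^{k+1} v)_x and (∂_t^{k+1} v)_{xx} exist and are continuous there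
          PX (ε (4*(r+1))) (vT (k+1)) g₁ ∧ PX (ε (4*(r+1))) g₁ g₂ ∧
          ContSq (ε (4*(r+1))) g₁ ∧ ContSq (ε (4*(r+1))) g₂ ∧
          -- (∂_t^k v)_x =: h₁ and (∂_t^k v)_{xt} exists and equals (∂_t^k v)_{tx} = g₁
          PX (ε (4*(r+1))) (vT k) h₁ ∧ ContSq (ε (4*(r+1))) h₁ ∧
          PT (ε (4*(r+1))) h₁ g₁ ∧
          -- (∂_t^k v)_{xx} =: h₂ and (∂_t^k v)_{xxt} exists and equals (∂_t^k v)_{txx} = g₂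
          PX (ε (4*(r+1))) h₁ h₂ ∧ ContSq (ε (4*(r+1))) h₂ ∧
          PT (ε (4*(r+1))) h₂ g₂) ∧
        -- ∂_x^ℓ ∂_t^{k+1} v exists and is continuous on 𝒟(ε_{s+4(r+1)}) for ℓ ≤ s
        (∀ s : ℕ, ∃ W : ℕ → ℝ → ℝ → Matrix (Fin m₁) (Fin m₂) ℂ,
          W 0 = vT (k+1) ∧ (∀ l < s, PX (ε (s + 4*(r+1))) (W l) (W (l+1))) ∧
          (∀ l ≤ s, ContSq (ε (s + 4*(r+1))) (W l))) :=
  dnls_t_derivatives_regularity_general a v vx vt vxx ε hv hNLS
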